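/- Density theorem for incenter subdivision: for any q ∈ P, any t ∈ P, and any ε > 0, there exists a finite sequence i₁,...,i_k ∈ {1,...,6} such that ‖M_{i₁}M_{i₂}···M_{i_k}·q − t‖ < ε. That is, the orbit of any point of P under all finite products of M1,...,M6 is dense in P. -/

import Mathlib

/-!
Each `Mᵢ` has column sums `1`, so it preserves coordinate sums; on the plane of sum-zero vectors
it contracts by `√3 / 2`, and the six images `Mᵢ P` cover `P`. Iterating the covering writes any
target as `t = M_{i₁} ⋯ M_{iₙ} s` with `s ∈ P`, and then
`‖M_{i₁} ⋯ M_{iₙ} q - t‖ = ‖M_{i₁} ⋯ M_{iₙ} (q - s)‖ ≤ (√3 / 2)ⁿ ‖q - s‖`, which is small because `P`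
is bounded.
-/

open Matrix Real

noncomputable section

def M1 : Matrix (Fin 3) (Fin 3) ℝ := !![1/2,0,0; 1/2,1/2,0; 0,1/2,1]
def M2 : Matrix (Fin 3) (Fin 3) ℝ := !![1/2,1/2,0; 0,1/2,0; 1/2,0,1]
def M3 : Matrix (Fin 3) (Fin 3) ℝ := !![1,0,1/2; 0,1/2,0; 0,1/2,1/2]
def M4 : Matrix (Fin 3) (Fin 3) ℝ := !![1,1/2,0; 0,1/2,1/2; 0,0,1/2]
def M5 : Matrix (Fin 3) (Fin 3) ℝ := !![1/2,0,1/2; 1/2,1,0; 0,0,1/2]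
def M6 : Matrix (Fin 3) (Fin 3) ℝ := !![1/2,0,0; 0,1,1/2; 1/2,0,1/2]

def Ms : Fin 6 → Matrix (Fin 3) (Fin 3) ℝ := ![M1, M2, M3, M4, M5, M6]

/-- The simplex of angle triples of (possibly degenerate) triangles. -/
def P : Set (EuclideanSpace ℝ (Fin 3)) :=
  {v | 0 ≤ v 0 ∧ 0 ≤ v 1 ∧ 0 ≤ v 2 ∧ v 0 + v 1 + v 2 = π}

/-- Apply a matrix to a point of Euclidean 3-space. -/
def app (M : Matrix (Fin 3) (Fin 3) ℝ) (v : EuclideanSpace ℝ (Fin 3)) :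
    EuclideanSpace ℝ (Fin 3) := WithLp.toLp 2 (M.mulVec v)

/-- A point of Euclidean 3-space from coordinates. -/
def vec (a b c : ℝ) : EuclideanSpace ℝ (Fin 3) := WithLp.toLp 2 ![a, b, c]

open Set Filter Topology

local notation "ℝ³" => EuclideanSpace ℝ (Fin 3)

lemma app_apply (M : Matrix (Fin 3) (Fin 3) ℝ) (v : ℝ³) (j : Fin 3) :
    app M v j = M j 0 * v 0 + M j 1 * v 1 + M j 2 * v 2 := by
  simp [app, Matrix.mulVec, dotProduct, Fin.sum_univ_three]

lemma app_one (v : ℝ³) : app 1 v = v := by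
  simp [app]

lemma app_mul (A B : Matrix (Fin 3) (Fin 3) ℝ) (v : ℝ³) :
    app (A * B) v = app A (app B v) := by
  simp [app, Matrix.mulVec_mulVec]

lemma app_sub (A : Matrix (Fin 3) (Fin 3) ℝ) (v w : ℝ³) :
    app A (v - w) = app A v - app A w := by
  simp [app, Matrix.mulVec_sub]

section IteratedSystem

variable {ι : Type*} (A : ι → Matrix (Fin 3) (Fin 3) ℝ)

lemma exists_list_app_prod_eq {S : Set ℝ³}
    (hcover : ∀ t ∈ S, ∃ i, ∃ s ∈ S, app (A i) s = t) {t : ℝ³} (ht : t ∈ S) (n : ℕ) :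
    ∃ l : List ι, l.length = n ∧ ∃ s ∈ S, app (l.map A).prod s = t := by
  induction n with
  | zero => exact ⟨[], rfl, t, ht, app_one t⟩
  | succ n ih =>
    obtain ⟨l, rfl, s, hs, rfl⟩ := ih
    obtain ⟨i, s', hs', rfl⟩ := hcover s hs
    refine ⟨l ++ [i], by simp, s', hs', ?_⟩
    simp [app_mul]

lemma norm_app_prod_le {V : Set ℝ³} {c : ℝ} (hc : 0 ≤ c) (hV : ∀ i, MapsTo (app (A i)) V V)
    (hcontr : ∀ i, ∀ v ∈ V, ‖app (A i) v‖ ≤ c * ‖v‖) (l : List ι) {v : ℝ³} (hv : v ∈ V) :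
    app (l.map A).prod v ∈ V ∧ ‖app (l.map A).prod v‖ ≤ c ^ l.length * ‖v‖ := by
  induction l with
  | nil => simpa [app_one] using hv
  | cons i l ih =>
    obtain ⟨hmem, hle⟩ := ih
    rw [List.map_cons, List.prod_cons, app_mul, List.length_cons, pow_succ']
    refine ⟨hV i hmem, ?_⟩
    calc ‖app (A i) (app (l.map A).prod v)‖ ≤ c * ‖app (l.map A).prod v‖ := hcontr i _ hmem
      _ ≤ c * (c ^ l.length * ‖v‖) := by gcongr
      _ = c * c ^ l.length * ‖v‖ := by ring

theorem exists_list_norm_app_prod_sub_lt {S V : Set ℝ³} {c : ℝ} (hc0 : 0 ≤ c) (hc1 : c < 1)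
    (hS : Bornology.IsBounded S) (hSV : ∀ q ∈ S, ∀ s ∈ S, q - s ∈ V)
    (hcover : ∀ t ∈ S, ∃ i, ∃ s ∈ S, app (A i) s = t) (hV : ∀ i, MapsTo (app (A i)) V V)
    (hcontr : ∀ i, ∀ v ∈ V, ‖app (A i) v‖ ≤ c * ‖v‖) {q t : ℝ³} (hq : q ∈ S) (ht : t ∈ S)
    {ε : ℝ} (hε : 0 < ε) :
    ∃ l : List ι, ‖app (l.map A).prod q - t‖ < ε := by
  obtain ⟨C, hC⟩ := Metric.isBounded_iff.mp hS
  have hsmall : Tendsto (fun n : ℕ ↦ c ^ n * C) atTop (𝓝 0) := by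
    simpa using (tendsto_pow_atTop_nhds_zero_of_lt_one hc0 hc1).mul_const C
  obtain ⟨n, hn⟩ := (hsmall.eventually (gt_mem_nhds hε)).exists
  obtain ⟨l, rfl, s, hs, rfl⟩ := exists_list_app_prod_eq A hcover ht n
  refine ⟨l, ?_⟩
  calc ‖app (l.map A).prod q - app (l.map A).prod s‖
      = ‖app (l.map A).prod (q - s)‖ := by rw [app_sub]
    _ ≤ c ^ l.length * ‖q - s‖ := (norm_app_prod_le A hc0 hV hcontr l (hSV q hq s hs)).2
    _ ≤ c ^ l.length * C := by gcongr; exact dist_eq_norm q s ▸ hC hq hs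
    _ < ε := hn

end IteratedSystem

lemma app_Ms_sum (i : Fin 6) (v : ℝ³) :
    app (Ms i) v 0 + app (Ms i) v 1 + app (Ms i) v 2 = v 0 + v 1 + v 2 := by
  fin_cases i <;>
    simp only [Ms, M1, M2, M3, M4, M5, M6, Fin.reduceFinMk, app_apply, of_apply, cons_val',
      cons_val_zero, cons_val_one, cons_val, cons_val_fin_one] <;> ring

lemma mapsTo_app_Ms_sum_eq (i : Fin 6) (a : ℝ) :
    MapsTo (app (Ms i)) {v | v 0 + v 1 + v 2 = a} {v | v 0 + v 1 + v 2 = a} :=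
  fun v hv ↦ (app_Ms_sum i v).trans hv

lemma norm_sq_app_Ms_le (i : Fin 6) {v : ℝ³} (hv : v 0 + v 1 + v 2 = 0) :
    ‖app (Ms i) v‖ ^ 2 ≤ 3 / 4 * ‖v‖ ^ 2 := by
  have h2 : v 2 = -v 0 - v 1 := by linarith
  simp only [EuclideanSpace.real_norm_sq_eq, Fin.sum_univ_three]
  fin_cases i <;>
    simp only [Ms, M1, M2, M3, M4, M5, M6, Fin.reduceFinMk, app_apply, of_apply, cons_val',
      cons_val_zero, cons_val_one, cons_val, cons_val_fin_one, h2] <;>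
    nlinarith [sq_nonneg (v 0), sq_nonneg (v 1), sq_nonneg (v 0 + v 1)]

lemma norm_app_Ms_le (i : Fin 6) {v : ℝ³} (hv : v 0 + v 1 + v 2 = 0) :
    ‖app (Ms i) v‖ ≤ √3 / 2 * ‖v‖ := by
  refine le_of_sq_le_sq ?_ (by positivity)
  rw [mul_pow, div_pow, sq_sqrt zero_le_three]
  linarith [norm_sq_app_Ms_le i hv]

def MsInv : Fin 6 → Matrix (Fin 3) (Fin 3) ℝ :=
  ![!![2,0,0; -2,2,0; 1,-1,1], !![2,-2,0; 0,2,0; -1,1,1], !![1,1,-1; 0,2,0; 0,-2,2],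
    !![1,-1,1; 0,2,-2; 0,0,2], !![2,0,-2; -1,1,1; 0,0,2], !![2,0,0; 1,1,-1; -2,0,2]]

lemma Ms_mul_MsInv (i : Fin 6) : Ms i * MsInv i = 1 := by
  rw [Matrix.one_fin_three]
  fin_cases i <;> norm_num [Ms, MsInv, M1, M2, M3, M4, M5, M6, Matrix.mul_fin_three]

lemma exists_app_MsInv_nonneg {t : ℝ³} (ht : t ∈ P) :
    ∃ i, 0 ≤ app (MsInv i) t 0 ∧ 0 ≤ app (MsInv i) t 1 ∧ 0 ≤ app (MsInv i) t 2 := by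
  obtain ⟨h0, h1, h2, -⟩ := ht
  rcases le_total (t 0) (t 1) with h01 | h10
  · rcases le_total (t 1) (t 0 + t 2) with h | h
    · refine ⟨0, ?_, ?_, ?_⟩ <;>
        simp only [app_apply, MsInv, of_apply, cons_val', cons_val_zero, cons_val_one, cons_val,
          cons_val_fin_one] <;> linarith
    rcases le_total (t 0) (t 2) with h02 | h20
    · refine ⟨5, ?_, ?_, ?_⟩ <;>
        simp only [app_apply, MsInv, of_apply, cons_val', cons_val_zero, cons_val_one, cons_val,
          cons_val_fin_one] <;> linarith
    · refine ⟨4, ?_, ?_, ?_⟩ <;>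
        simp only [app_apply, MsInv, of_apply, cons_val', cons_val_zero, cons_val_one, cons_val,
          cons_val_fin_one] <;> linarith
  · rcases le_total (t 0) (t 1 + t 2) with h | h
    · refine ⟨1, ?_, ?_, ?_⟩ <;>
        simp only [app_apply, MsInv, of_apply, cons_val', cons_val_zero, cons_val_one, cons_val,
          cons_val_fin_one] <;> linarith
    rcases le_total (t 1) (t 2) with h12 | h21
    · refine ⟨2, ?_, ?_, ?_⟩ <;>
        simp only [app_apply, MsInv, of_apply, cons_val', cons_val_zero, cons_val_one, cons_val,
          cons_val_fin_one] <;> linarith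
    · refine ⟨3, ?_, ?_, ?_⟩ <;>
        simp only [app_apply, MsInv, of_apply, cons_val', cons_val_zero, cons_val_one, cons_val,
          cons_val_fin_one] <;> linarith

lemma exists_app_Ms_eq {t : ℝ³} (ht : t ∈ P) : ∃ i, ∃ s ∈ P, app (Ms i) s = t := by
  obtain ⟨i, h0, h1, h2⟩ := exists_app_MsInv_nonneg ht
  have h : app (Ms i) (app (MsInv i) t) = t := by rw [← app_mul, Ms_mul_MsInv, app_one]
  exact ⟨i, _, ⟨h0, h1, h2, by rw [← app_Ms_sum i, h]; exact ht.2.2.2⟩, h⟩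

lemma isBounded_P : Bornology.IsBounded P := by
  refine (Metric.isBounded_closedBall (x := 0) (r := π)).subset fun v ⟨h0, h1, h2, hsum⟩ ↦ ?_
  rw [mem_closedBall_zero_iff, ← sq_le_sq₀ (norm_nonneg v) pi_pos.le,
    EuclideanSpace.real_norm_sq_eq, Fin.sum_univ_three, ← hsum]
  nlinarith [mul_nonneg h0 h1, mul_nonneg h1 h2, mul_nonneg h0 h2]

theorem stmt9 (q : EuclideanSpace ℝ (Fin 3)) (hq : q ∈ P)
    (t : EuclideanSpace ℝ (Fin 3)) (ht : t ∈ P) (ε : ℝ) (hε : 0 < ε) :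
    ∃ l : List (Fin 6), ‖app (l.map Ms).prod q - t‖ < ε := by
  have hc1 : √3 / 2 < 1 := by
    rw [div_lt_one two_pos, sqrt_lt' two_pos]
    norm_num
  refine exists_list_norm_app_prod_sub_lt Ms (by positivity) hc1 isBounded_P
    (fun q hq s hs ↦ ?_) (fun _ ↦ exists_app_Ms_eq) (fun i ↦ mapsTo_app_Ms_sum_eq i 0)
    (fun i _ hv ↦ norm_app_Ms_le i hv) hq ht hε
  simp only [mem_ofPred_eq, PiLp.sub_apply]
  linarith [hq.2.2.2, hs.2.2.2]
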